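/- arXiv:2410.10788 — 6 statements merged into one kernel-verified Lean document; each statement's English description precedes it below -/
import Mathlib

section
/- Let I be a finite set of points in ℝ² with |I| odd. Then the LP yolk radius of I is at least one half of the yolk radius of I. -/
open scoped RealInnerProductSpace
open Real

noncomputable section

/-- Points of Euclidean space `ℝ^k`. -/
abbrev Pt (k : ℕ) := EuclideanSpace ℝ (Fin k)

/-- `(a, b)` (with `‖a‖ = 1`) is a median hyperplane for the finite set of ideal points `I`:
at least `|I|/2` points are on each closed side. -/
def IsMedianHyperplane {k : ℕ} (I : Finset (Pt k)) (a : Pt k) (b : ℝ) : Prop :=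
  ‖a‖ = 1 ∧
    (I.card : ℝ) / 2 ≤ ((I.filter fun x => ⟪a, x⟫ ≤ b).card : ℝ) ∧
    (I.card : ℝ) / 2 ≤ ((I.filter fun x => b ≤ ⟪a, x⟫).card : ℝ)

/-- A limiting median hyperplane for `I ⊆ ℝ^k` is a median hyperplane containing at least
`k` points of `I`. -/
def IsLimitingMedianHyperplane {k : ℕ} (I : Finset (Pt k)) (a : Pt k) (b : ℝ) : Prop :=
  IsMedianHyperplane I a b ∧ k ≤ (I.filter fun x => ⟪a, x⟫ = b).card

/-- The yolk radius: infimum of `r ≥ 0` such that some closed ball `B(c,r)` intersects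
every median hyperplane of `I` (the ball `B(c,r)` meets `H(a,b)` iff `|⟪a,c⟫ - b| ≤ r`). -/
def yolkRadius {k : ℕ} (I : Finset (Pt k)) : ℝ :=
  sInf {r : ℝ | 0 ≤ r ∧ ∃ c : Pt k, ∀ a b, IsMedianHyperplane I a b → |⟪a, c⟫ - b| ≤ r}

/-- The LP yolk radius: infimum of `r ≥ 0` such that some closed ball `B(c,r)` intersects
every limiting median hyperplane of `I`. -/
def lpYolkRadius {k : ℕ} (I : Finset (Pt k)) : ℝ :=
  sInf {r : ℝ | 0 ≤ r ∧ ∃ c : Pt k, ∀ a b, IsLimitingMedianHyperplane I a b → |⟪a, c⟫ - b| ≤ r}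

/-- `B(c,r)` is a yolk of `I`: it intersects every median hyperplane, and every closed ball
intersecting every median hyperplane has radius at least `r`. -/
def IsYolk {k : ℕ} (I : Finset (Pt k)) (c : Pt k) (r : ℝ) : Prop :=
  (∀ a b, IsMedianHyperplane I a b → |⟪a, c⟫ - b| ≤ r) ∧
  ∀ (c' : Pt k) (r' : ℝ),
    (∀ a b, IsMedianHyperplane I a b → |⟪a, c'⟫ - b| ≤ r') → r ≤ r'

/-- `B(c,r)` is an LP yolk of `I`: it intersects every limiting median hyperplane, and every
closed ball intersecting every limiting median hyperplane has radius at least `r`. -/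
def IsLPYolk {k : ℕ} (I : Finset (Pt k)) (c : Pt k) (r : ℝ) : Prop :=
  (∀ a b, IsLimitingMedianHyperplane I a b → |⟪a, c⟫ - b| ≤ r) ∧
  ∀ (c' : Pt k) (r' : ℝ),
    (∀ a b, IsLimitingMedianHyperplane I a b → |⟪a, c'⟫ - b| ≤ r') → r ≤ r'

/-!
For odd `|I|` every direction has a unique median line, and it passes through a point of `I`.
As the normal direction `θ` turns, the median line pivots about a fixed point `p ∈ I` over an
arc `[d, u]` of length at most `π`, and the two end lines are limiting median lines. If the
ball `B(c', r)` meets all limiting median lines, the sine interpolation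
`sin (u - d) ⟪dir θ, w⟫ = sin (u - θ) ⟪dir d, w⟫ + sin (θ - d) ⟪dir u, w⟫` puts every line of
the arc within `r / cos ((u - d) / 2)` of `c'`. Hence `B(c', 2r)` meets all median lines unless some
pivot `p₀` has an arc longer than `2π/3`. In that case every other arc lies in the remaining gap
of length `< π/3`, and moving the centre from `c'` towards `p₀`, to distance `2r` from `p₀` if it
is farther, gives a ball of radius `2r` that still meets all median lines.
-/

def dir (θ : ℝ) : Pt 2 := !₂[cos θ, sin θ]

lemma inner_dir (θ : ℝ) (x : Pt 2) : ⟪dir θ, x⟫ = cos θ * x 0 + sin θ * x 1 := by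
  simp [dir, PiLp.inner_apply, Fin.sum_univ_two]
  ring

lemma norm_dir (θ : ℝ) : ‖dir θ‖ = 1 := by
  simp [dir, EuclideanSpace.norm_eq, Fin.sum_univ_two]

lemma dir_antiperiodic : Function.Antiperiodic dir π := by
  intro θ
  ext i
  fin_cases i <;> simp [dir]

lemma inner_dir_dir (θ γ : ℝ) : ⟪dir θ, dir γ⟫ = cos (θ - γ) := by
  rw [inner_dir, cos_sub]
  simp [dir]

lemma exists_eq_norm_smul_dir (v : Pt 2) : ∃ γ, v = ‖v‖ • dir γ := by
  set z : ℂ := Complex.orthonormalBasisOneI.repr.symm v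
  have hz : ‖z‖ = ‖v‖ := LinearIsometryEquiv.norm_map _ v
  refine ⟨z.arg, ?_⟩
  have hre : z.re = v 0 := by simp [z]
  have him : z.im = v 1 := by simp [z]
  ext i
  fin_cases i
  · simp [dir, ← hz, Complex.norm_mul_cos_arg, hre]
  · simp [dir, ← hz, Complex.norm_mul_sin_arg, him]

lemma exists_eq_dir {a : Pt 2} (ha : ‖a‖ = 1) : ∃ θ, a = dir θ := by
  simpa [ha] using exists_eq_norm_smul_dir a

lemma continuous_inner_dir (w : Pt 2) : Continuous fun θ => ⟪dir θ, w⟫ := by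
  simp only [inner_dir]
  fun_prop

lemma sin_sub_mul_inner_dir (w : Pt 2) (a b θ : ℝ) :
    sin (b - a) * ⟪dir θ, w⟫ = sin (b - θ) * ⟪dir a, w⟫ + sin (θ - a) * ⟪dir b, w⟫ := by
  simp only [inner_dir, sin_sub]
  ring

lemma exists_inner_dir_eq_zero_mem_Ioo {w : Pt 2} {φ : ℝ} (hφ : ⟪dir φ, w⟫ ≠ 0) :
    ∃ z ∈ Set.Ioo (φ - π) φ, ⟪dir z, w⟫ = 0 := by
  have hanti : ⟪dir (φ - π), w⟫ = -⟪dir φ, w⟫ := by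
    rw [dir_antiperiodic.sub_eq, inner_neg_left]
  have h0 : (0 : ℝ) ∈ Set.uIcc ⟪dir (φ - π), w⟫ ⟪dir φ, w⟫ := by
    rw [hanti, Set.mem_uIcc]
    rcases le_total 0 ⟪dir φ, w⟫ with h | h
    · exact Or.inl ⟨by linarith, h⟩
    · exact Or.inr ⟨h, by linarith⟩
  obtain ⟨z, hz, hz0⟩ :=
    intermediate_value_uIcc (continuous_inner_dir w).continuousOn h0
  rw [Set.uIcc_of_le (by linarith [pi_pos])] at hz
  refine ⟨z, ⟨lt_of_le_of_ne hz.1 ?_, lt_of_le_of_ne hz.2 ?_⟩, hz0⟩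
  · rintro rfl
    exact hφ (by linarith)
  · rintro rfl
    exact hφ hz0

lemma inner_dir_eq_div_mul {w : Pt 2} {z φ : ℝ} (hz : ⟪dir z, w⟫ = 0) (hφ : sin (φ - z) ≠ 0)
    (ψ : ℝ) : ⟪dir ψ, w⟫ = sin (ψ - z) / sin (φ - z) * ⟪dir φ, w⟫ := by
  have := sin_sub_mul_inner_dir w z φ ψ
  rw [hz, mul_zero, zero_add] at this
  field_simp
  linarith

lemma cos_mul_abs_inner_dir_le {w : Pt 2} {d u φ r : ℝ} (hdφ : d ≤ φ) (hφu : φ ≤ u)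
    (hud : u - d ≤ π) (hd : |⟪dir d, w⟫| ≤ r) (hu : |⟪dir u, w⟫| ≤ r) :
    cos ((u - d) / 2) * |⟪dir φ, w⟫| ≤ r := by
  rcases (hdφ.trans hφu).eq_or_lt with rfl | hlt
  · obtain rfl : φ = d := le_antisymm hφu hdφ
    simpa using hd
  set A := (u - d) / 2 with hA
  have hsinA : 0 < sin A := sin_pos_of_pos_of_lt_pi (by linarith) (by linarith [pi_pos])
  have hcosA : 0 ≤ cos A := cos_nonneg_of_mem_Icc ⟨by linarith [pi_pos], by linarith⟩
  have hsum : sin (u - φ) + sin (φ - d) ≤ 2 * sin A := by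
    rw [sin_add_sin, show (u - φ + (φ - d)) / 2 = A by ring]
    nlinarith [cos_le_one ((u - φ - (φ - d)) / 2)]
  have h1 : 0 ≤ sin (u - φ) := sin_nonneg_of_nonneg_of_le_pi (by linarith) (by linarith)
  have h2 : 0 ≤ sin (φ - d) := sin_nonneg_of_nonneg_of_le_pi (by linarith) (by linarith)
  have hr : 0 ≤ r := (abs_nonneg _).trans hd
  have key : 2 * sin A * (cos A * |⟪dir φ, w⟫|) ≤ 2 * sin A * r := by
    calc 2 * sin A * (cos A * |⟪dir φ, w⟫|) = |sin (u - d) * ⟪dir φ, w⟫| := by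
          rw [show u - d = 2 * A by ring, sin_two_mul, abs_mul,
            abs_of_nonneg (show 0 ≤ 2 * sin A * cos A by positivity)]
          ring
      _ ≤ sin (u - φ) * |⟪dir d, w⟫| + sin (φ - d) * |⟪dir u, w⟫| := by
          rw [sin_sub_mul_inner_dir w d u φ]
          refine (abs_add_le _ _).trans_eq ?_
          rw [abs_mul, abs_mul, abs_of_nonneg h1, abs_of_nonneg h2]
      _ ≤ 2 * sin A * r := by
          nlinarith [mul_le_mul_of_nonneg_left hd h1, mul_le_mul_of_nonneg_left hu h2]
  exact le_of_mul_le_mul_left key (by positivity)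

lemma Odd.lt_two_mul_of_half_le {n m : ℕ} (hn : Odd n) (h : (n : ℝ) / 2 ≤ m) : n < 2 * m := by
  have : n ≤ 2 * m := by exact_mod_cast (by linarith : (n : ℝ) ≤ 2 * m)
  obtain ⟨j, rfl⟩ := hn
  omega

namespace IsMedianHyperplane

variable {k : ℕ} {I : Finset (Pt k)} {a a' : Pt k} {b b' : ℝ}

lemma of_imp (h : IsMedianHyperplane I a b) (ha' : ‖a'‖ = 1)
    (hle : ∀ x ∈ I, ⟪a, x⟫ ≤ b → ⟪a', x⟫ ≤ b') (hge : ∀ x ∈ I, b ≤ ⟪a, x⟫ → b' ≤ ⟪a', x⟫) :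
    IsMedianHyperplane I a' b' :=
  ⟨ha', h.2.1.trans (by exact_mod_cast Finset.card_le_card (Finset.monotone_filter_right I hle)),
    h.2.2.trans (by exact_mod_cast Finset.card_le_card (Finset.monotone_filter_right I hge))⟩

lemma neg (h : IsMedianHyperplane I a b) : IsMedianHyperplane I (-a) (-b) := by
  refine ⟨by rw [norm_neg, h.1], ?_, ?_⟩
  · simpa only [inner_neg_left, neg_le_neg_iff] using h.2.2
  · simpa only [inner_neg_left, neg_le_neg_iff] using h.2.1

lemma neg_iff : IsMedianHyperplane I (-a) (-b) ↔ IsMedianHyperplane I a b :=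
  ⟨fun h => by simpa using h.neg, neg⟩

lemma exists_le_ge (hodd : Odd I.card) (h : IsMedianHyperplane I a b)
    (h' : IsMedianHyperplane I a b') : ∃ x ∈ I, ⟪a, x⟫ ≤ b ∧ b' ≤ ⟪a, x⟫ := by
  classical
  have h1 := hodd.lt_two_mul_of_half_le h.2.1
  have h2 := hodd.lt_two_mul_of_half_le h'.2.2
  obtain ⟨x, hx⟩ := Finset.inter_nonempty_of_card_lt_card_add_card
    (Finset.filter_subset (fun x => ⟪a, x⟫ ≤ b) I)
    (Finset.filter_subset (fun x => b' ≤ ⟪a, x⟫) I) (by omega)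
  simp only [Finset.mem_inter, Finset.mem_filter] at hx
  exact ⟨x, hx.1.1, hx.1.2, hx.2.2⟩

lemma eq_of_odd (hodd : Odd I.card) (h : IsMedianHyperplane I a b)
    (h' : IsMedianHyperplane I a b') : b = b' := by
  obtain ⟨x, -, hxb, hxb'⟩ := exists_le_ge hodd h h'
  obtain ⟨y, -, hyb', hyb⟩ := exists_le_ge hodd h' h
  linarith

lemma exists_mem_inner_eq (hodd : Odd I.card) (h : IsMedianHyperplane I a b) :
    ∃ p ∈ I, ⟪a, p⟫ = b := by
  obtain ⟨x, hx, hle, hge⟩ := exists_le_ge hodd h h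
  exact ⟨x, hx, le_antisymm hle hge⟩

lemma isLimitingMedianHyperplane {I : Finset (Pt 2)} {a p q : Pt 2} {b : ℝ}
    (h : IsMedianHyperplane I a b) (hp : p ∈ I) (hq : q ∈ I) (hqp : q ≠ p)
    (hpb : ⟪a, p⟫ = b) (hqb : ⟪a, q⟫ = b) : IsLimitingMedianHyperplane I a b :=
  ⟨h, Finset.one_lt_card.mpr
    ⟨q, Finset.mem_filter.mpr ⟨hq, hqb⟩, p, Finset.mem_filter.mpr ⟨hp, hpb⟩, hqp⟩⟩

end IsMedianHyperplane

def IsMedianAt (I : Finset (Pt 2)) (p : Pt 2) (θ : ℝ) : Prop :=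
  IsMedianHyperplane I (dir θ) ⟪dir θ, p⟫

lemma isMedianAt_periodic (I : Finset (Pt 2)) (p : Pt 2) :
    Function.Periodic (IsMedianAt I p) π := by
  intro θ
  simp only [IsMedianAt, dir_antiperiodic θ, inner_neg_left]
  exact propext IsMedianHyperplane.neg_iff

lemma IsMedianAt.of_sign {I : Finset (Pt 2)} {p : Pt 2} {φ ψ : ℝ} (h : IsMedianAt I p φ)
    (hsign : ∀ x ∈ I, ∃ c, 0 ≤ c ∧ ⟪dir ψ, x - p⟫ = c * ⟪dir φ, x - p⟫) :
    IsMedianAt I p ψ := by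
  refine h.of_imp (norm_dir ψ) (fun x hx hle => ?_) (fun x hx hge => ?_) <;>
  · obtain ⟨c, hc, hcx⟩ := hsign x hx
    rw [inner_sub_right, inner_sub_right] at hcx
    nlinarith

lemma exists_nonneg_inner_dir_eq_mul {w : Pt 2} {z φ θ : ℝ} (hz : ⟪dir z, w⟫ = 0)
    (hφ : φ ∈ Set.Ioo z (z + π)) (hθ : θ ∈ Set.Icc z (z + π)) :
    ∃ c, 0 ≤ c ∧ ⟪dir θ, w⟫ = c * ⟪dir φ, w⟫ := by
  have hsin : 0 < sin (φ - z) := sin_pos_of_pos_of_lt_pi (by linarith [hφ.1]) (by linarith [hφ.2])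
  refine ⟨_, div_nonneg ?_ hsin.le, inner_dir_eq_div_mul hz hsin.ne' θ⟩
  exact sin_nonneg_of_nonneg_of_le_pi (by linarith [hθ.1]) (by linarith [hθ.2])

lemma inner_dir_ne_zero {w : Pt 2} {z φ θ : ℝ} (hz : ⟪dir z, w⟫ = 0)
    (hφ : φ ∈ Set.Ioo z (z + π)) (hθ : θ ∈ Set.Ioo z (z + π)) (hw : ⟪dir φ, w⟫ ≠ 0) :
    ⟪dir θ, w⟫ ≠ 0 := by
  have hsinφ : 0 < sin (φ - z) :=
    sin_pos_of_pos_of_lt_pi (by linarith [hφ.1]) (by linarith [hφ.2])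
  have hsinθ : 0 < sin (θ - z) :=
    sin_pos_of_pos_of_lt_pi (by linarith [hθ.1]) (by linarith [hθ.2])
  rw [inner_dir_eq_div_mul hz hsinφ.ne' θ]
  positivity

structure IsPivotArc (I : Finset (Pt 2)) (p : Pt 2) (d u : ℝ) : Prop where
  sub_le_pi : u - d ≤ π
  isMedianAt : ∀ θ ∈ Set.Icc d u, IsMedianAt I p θ
  exists_ne_left : ∃ q ∈ I, q ≠ p ∧ ⟪dir d, q⟫ = ⟪dir d, p⟫
  exists_ne_right : ∃ q ∈ I, q ≠ p ∧ ⟪dir u, q⟫ = ⟪dir u, p⟫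
  eq_of_mem_Ioo : ∀ θ ∈ Set.Ioo d u, ∀ q ∈ I, ⟪dir θ, q⟫ = ⟪dir θ, p⟫ → q = p

lemma isPivotArc_of_exists_ne {I : Finset (Pt 2)} {p : Pt 2} {φ : ℝ} (h : IsMedianAt I p φ)
    (hq : ∃ q ∈ I, q ≠ p ∧ ⟪dir φ, q⟫ = ⟪dir φ, p⟫) : IsPivotArc I p φ φ where
  sub_le_pi := by simp [pi_pos.le]
  isMedianAt θ hθ := by rwa [le_antisymm hθ.2 hθ.1]
  exists_ne_left := hq
  exists_ne_right := hq
  eq_of_mem_Ioo θ hθ := absurd (hθ.1.trans hθ.2) (lt_irrefl φ)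

lemma exists_isPivotArc {I : Finset (Pt 2)} {p : Pt 2} {φ : ℝ} (hn : 2 ≤ I.card) (hp : p ∈ I)
    (h : IsMedianAt I p φ) : ∃ d u, d ≤ φ ∧ φ ≤ u ∧ IsPivotArc I p d u := by
  classical
  by_cases hq : ∃ q ∈ I, q ≠ p ∧ ⟪dir φ, q⟫ = ⟪dir φ, p⟫
  · exact ⟨φ, φ, le_rfl, le_rfl, isPivotArc_of_exists_ne h hq⟩
  push Not at hq
  set J := I.erase p
  have hJ : J.Nonempty := by
    rw [← Finset.card_pos, Finset.card_erase_of_mem hp]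
    omega
  have hφ : ∀ q ∈ J, ⟪dir φ, q - p⟫ ≠ 0 := fun q hqJ => by
    rw [inner_sub_right, sub_ne_zero]
    exact hq q (Finset.mem_of_mem_erase hqJ) (Finset.ne_of_mem_erase hqJ)
  -- `z q` is the last angle before `φ` at which the line through `p` meets `q`;
  -- the next one is `z q + π`.
  choose! z hz hz0 using fun q hqJ => exists_inner_dir_eq_zero_mem_Ioo (hφ q hqJ)
  have hφz : ∀ q ∈ J, φ ∈ Set.Ioo (z q) (z q + π) := fun q hqJ =>
    ⟨(hz q hqJ).2, by linarith [(hz q hqJ).1]⟩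
  obtain ⟨qd, hqd, hmax⟩ := Finset.exists_max_image J z hJ
  obtain ⟨qu, hqu, hmin⟩ := Finset.exists_min_image J z hJ
  have hsub : ∀ q ∈ J, Set.Icc (z qd) (z qu + π) ⊆ Set.Icc (z q) (z q + π) := fun q hqJ =>
    Set.Icc_subset_Icc (hmax q hqJ) (by linarith [hmin q hqJ])
  refine ⟨z qd, z qu + π, (hz qd hqd).2.le, (hφz qu hqu).2.le,
    ⟨by linarith [hmin qd hqd], ?_, ?_, ?_, ?_⟩⟩
  · refine fun θ hθ => h.of_sign fun x hx => ?_
    by_cases hxp : x = p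
    · exact ⟨0, le_rfl, by simp [hxp]⟩
    have hxJ : x ∈ J := Finset.mem_erase.mpr ⟨hxp, hx⟩
    exact exists_nonneg_inner_dir_eq_mul (hz0 x hxJ) (hφz x hxJ) (hsub x hxJ hθ)
  · refine ⟨qd, Finset.mem_of_mem_erase hqd, Finset.ne_of_mem_erase hqd, ?_⟩
    simpa [inner_sub_right, sub_eq_zero] using hz0 qd hqd
  · refine ⟨qu, Finset.mem_of_mem_erase hqu, Finset.ne_of_mem_erase hqu, ?_⟩
    simpa [dir_antiperiodic _, inner_sub_right, sub_eq_zero] using hz0 qu hqu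
  · intro θ hθ q hqI hθq
    by_contra hqp
    have hqJ : q ∈ J := Finset.mem_erase.mpr ⟨hqp, hqI⟩
    refine inner_dir_ne_zero (hz0 q hqJ) (hφz q hqJ) ?_ (hφ q hqJ)
      (by rw [inner_sub_right, hθq, sub_self])
    exact ⟨(hmax q hqJ).trans_lt hθ.1, hθ.2.trans_le (by linarith [hmin q hqJ])⟩

section LimitingBall

variable {I : Finset (Pt 2)} {c' p : Pt 2} {r d u φ : ℝ}

lemma abs_inner_dir_sub_le_of_limiting
    (hc' : ∀ a b, IsLimitingMedianHyperplane I a b → |⟪a, c'⟫ - b| ≤ r) (hp : p ∈ I)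
    (hmed : IsMedianAt I p φ) (hq : ∃ q ∈ I, q ≠ p ∧ ⟪dir φ, q⟫ = ⟪dir φ, p⟫) :
    |⟪dir φ, c' - p⟫| ≤ r := by
  obtain ⟨q, hqI, hqp, hqφ⟩ := hq
  rw [inner_sub_right]
  exact hc' _ _ (hmed.isLimitingMedianHyperplane hp hqI hqp rfl hqφ)

lemma IsPivotArc.cos_mul_abs_inner_dir_le (harc : IsPivotArc I p d u) (hp : p ∈ I)
    (hc' : ∀ a b, IsLimitingMedianHyperplane I a b → |⟪a, c'⟫ - b| ≤ r)
    (hφ : φ ∈ Set.Icc d u) : cos ((u - d) / 2) * |⟪dir φ, c' - p⟫| ≤ r :=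
  have hdu : d ≤ u := hφ.1.trans hφ.2
  _root_.cos_mul_abs_inner_dir_le hφ.1 hφ.2 harc.sub_le_pi
    (abs_inner_dir_sub_le_of_limiting hc' hp (harc.isMedianAt d ⟨le_rfl, hdu⟩)
      harc.exists_ne_left)
    (abs_inner_dir_sub_le_of_limiting hc' hp (harc.isMedianAt u ⟨hdu, le_rfl⟩)
      harc.exists_ne_right)

end LimitingBall

lemma IsPivotArc.exists_int_mul_pi_le_and_le {I : Finset (Pt 2)} {p p₀ : Pt 2} {d u φ s t : ℝ}
    (hodd : Odd I.card) (harc : IsPivotArc I p d u) (hφ : φ ∈ Set.Icc d u) (hp₀ : p₀ ∈ I)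
    (hst : s ≤ t) (hs₀t : ∀ θ ∈ Set.Icc s t, IsMedianAt I p₀ θ)
    (hφp₀ : ⟪dir φ, p₀⟫ ≠ ⟪dir φ, p⟫) :
    ∃ k : ℤ, t + k * π ≤ d ∧ u ≤ s + π + k * π := by
  have hφ₀ : ¬IsMedianAt I p₀ φ := fun h₀ => hφp₀ (h₀.eq_of_odd hodd (harc.isMedianAt φ hφ))
  have hIoo₀ : ∀ θ ∈ Set.Ioo d u, ¬IsMedianAt I p₀ θ := fun θ hθ h₀ => by
    have := h₀.eq_of_odd hodd (harc.isMedianAt θ (Set.Ioo_subset_Icc_self hθ))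
    rw [harc.eq_of_mem_Ioo θ hθ p₀ hp₀ this] at hφp₀
    exact hφp₀ rfl
  have hper : ∀ j : ℤ, ∀ θ ∈ Set.Icc s t, IsMedianAt I p₀ (θ + j * π) := fun j θ hθ => by
    rw [(isMedianAt_periodic I p₀).int_mul j θ]
    exact hs₀t θ hθ
  set k := toIcoDiv pi_pos s φ
  have hk : φ - k * π ∈ Set.Ico s (s + π) := by
    rw [← zsmul_eq_mul]
    exact sub_toIcoDiv_zsmul_mem_Ico pi_pos s φ
  have htφ : t + k * π < φ := by
    by_contra! hle
    exact hφ₀ (by simpa using hper k (φ - k * π) ⟨hk.1, by linarith⟩)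
  refine ⟨k, ?_, ?_⟩
  · by_contra! hlt
    exact hIoo₀ _ ⟨hlt, htφ.trans_le hφ.2⟩ (hper k t ⟨hst, le_rfl⟩)
  · by_contra! hlt
    refine hIoo₀ (s + (k + 1 : ℤ) * π) ⟨?_, ?_⟩ (hper (k + 1) s ⟨le_rfl, hst⟩) <;>
    · push_cast
      linarith [hφ.1, hk.2]

lemma cos_half_le_and_abs_cos_le {ρ r s t γ : ℝ} (hr : 0 ≤ r) (hγ : γ ∈ Set.Ico s (s + π))
    (hst : 2 * π / 3 < t - s) (hts : t - s ≤ π) (hρ : 2 * r < ρ)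
    (hs : ρ * |cos (s - γ)| ≤ r) (ht : ρ * |cos (t - γ)| ≤ r) :
    ρ * cos ((t - s) / 2) ≤ r ∧ ∀ ψ ∈ Set.Icc t (s + π), ρ * |cos (ψ - γ)| ≤ r := by
  have hρ0 : 0 < ρ := by linarith
  have hcos_sγ : cos (γ - s) = cos (s - γ) := by rw [← cos_neg, neg_sub]
  have hγs : γ - s < 2 * π / 3 := by
    by_contra! hle
    have h1 : cos (γ - s) ≤ cos (π - π / 3) :=
      cos_le_cos_of_nonneg_of_le_pi (by linarith [pi_pos]) (by linarith [hγ.2]) (by linarith)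
    rw [cos_pi_sub, cos_pi_div_three, hcos_sγ] at h1
    nlinarith [neg_abs_le (cos (s - γ))]
  refine ⟨?_, fun ψ hψ => ?_⟩
  · rcases le_total (γ - s) ((t - s) / 2) with h | h
    · have := cos_le_cos_of_nonneg_of_le_pi (by linarith [hγ.1]) (by linarith) h
      nlinarith [le_abs_self (cos (s - γ))]
    · have := cos_le_cos_of_nonneg_of_le_pi (by linarith) (by linarith)
        (by linarith : t - γ ≤ (t - s) / 2)
      nlinarith [le_abs_self (cos (t - γ))]
  · have hupper : cos (ψ - γ) ≤ cos (t - γ) :=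
      cos_le_cos_of_nonneg_of_le_pi (by linarith) (by linarith [hψ.2, hγ.1]) (by linarith [hψ.1])
    have hlower : cos (π - (γ - s)) ≤ cos (ψ - γ) :=
      cos_le_cos_of_nonneg_of_le_pi (by linarith [hψ.1]) (by linarith [hγ.1]) (by linarith [hψ.2])
    rw [cos_pi_sub, hcos_sγ] at hlower
    have : |cos (ψ - γ)| ≤ max |cos (s - γ)| |cos (t - γ)| := abs_le.mpr
      ⟨by linarith [le_abs_self (cos (s - γ)), le_max_left |cos (s - γ)| |cos (t - γ)|],
        by linarith [le_abs_self (cos (t - γ)), le_max_right |cos (s - γ)| |cos (t - γ)|]⟩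
    calc ρ * |cos (ψ - γ)| ≤ ρ * max |cos (s - γ)| |cos (t - γ)| := by gcongr
      _ ≤ r := by rw [mul_max_of_nonneg _ _ hρ0.le]; exact max_le hs ht

lemma abs_inner_dir_le_of_long {v : Pt 2} {r s t : ℝ} (hr : 0 ≤ r) (hst : 2 * π / 3 < t - s)
    (hts : t - s ≤ π) (hv : 2 * r < ‖v‖) (hs : |⟪dir s, v⟫| ≤ r) (ht : |⟪dir t, v⟫| ≤ r) :
    ‖v‖ * cos ((t - s) / 2) ≤ r ∧ ∀ ψ ∈ Set.Icc t (s + π), |⟪dir ψ, v⟫| ≤ r := by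
  obtain ⟨γ, hγ⟩ := exists_eq_norm_smul_dir v
  obtain ⟨k, hk⟩ : ∃ k : ℤ, γ = toIcoMod pi_pos s γ + k • π :=
    ⟨toIcoDiv pi_pos s γ, by rw [← self_sub_toIcoDiv_zsmul, sub_add_cancel]⟩
  have habs : ∀ ψ, |⟪dir ψ, v⟫| = ‖v‖ * |cos (ψ - toIcoMod pi_pos s γ)| := fun ψ => by
    have hper : Function.Periodic (fun x => |cos x|) π := fun x => by simp [cos_add_pi]
    conv_lhs => rw [hγ, inner_smul_right, inner_dir_dir, hk, ← sub_sub]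
    rw [abs_mul, abs_norm]
    exact congrArg _ (hper.sub_zsmul_eq k)
  simp only [habs] at hs ht ⊢
  exact cos_half_le_and_abs_cos_le hr (toIcoMod_mem_Ico pi_pos s γ) hst hts hv hs ht

/-- The new centre will be `p₀ + μ • v`, where `v = c' - p₀` and `[s, t]` is the long arc of the
pivot `p₀`. -/
lemma exists_shrink_factor {v : Pt 2} {r s t : ℝ} (hr : 0 ≤ r) (hst : 2 * π / 3 < t - s)
    (hts : t - s ≤ π) (hs : |⟪dir s, v⟫| ≤ r) (ht : |⟪dir t, v⟫| ≤ r) :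
    ∃ μ, 0 ≤ μ ∧ μ ≤ 1 ∧ μ * ‖v‖ ≤ 2 * r ∧ ∀ ψ ∈ Set.Icc t (s + π),
      r + sin ((t - s) / 2) * ((1 - μ) * |⟪dir ψ, v⟫|) ≤ 2 * r * sin ((t - s) / 2) := by
  set x := (t - s) / 2 with hx
  have hcos0 : 0 ≤ cos x := cos_nonneg_of_mem_Icc ⟨by linarith [pi_pos], by linarith⟩
  have hcos : cos x ≤ 1 / 2 := by
    rw [← cos_pi_div_three]
    exact cos_le_cos_of_nonneg_of_le_pi (by positivity) (by linarith) (by linarith)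
  have hsin0 : 0 ≤ sin x := sin_nonneg_of_nonneg_of_le_pi (by linarith [pi_pos]) (by linarith)
  have hsin : 1 / 2 ≤ sin x := by nlinarith [sin_sq_add_cos_sq x]
  by_cases hv : ‖v‖ ≤ 2 * r
  · exact ⟨1, zero_le_one, le_rfl, by simpa using hv, fun ψ _ => by nlinarith⟩
  push Not at hv
  obtain ⟨hcosv, hgap⟩ := abs_inner_dir_le_of_long hr hst hts hv hs ht
  have hρ : 0 < ‖v‖ := by linarith
  have htrig : 1 - sin x ≤ 2 * sin x * cos x := by nlinarith [sin_sq_add_cos_sq x, sin_le_one x]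
  set μ := 2 * r / ‖v‖
  have hμv : μ * ‖v‖ = 2 * r := div_mul_cancel₀ _ hρ.ne'
  have hμ1 : μ ≤ 1 := (div_le_one hρ).mpr hv.le
  refine ⟨μ, by positivity, hμ1, hμv.le, fun ψ hψ => ?_⟩
  have hkey : (1 - sin x) * ‖v‖ ≤ sin x * μ * ‖v‖ := by
    nlinarith [mul_le_mul_of_nonneg_left hcosv (by positivity : 0 ≤ 2 * sin x)]
  have hμsin : 1 - sin x ≤ sin x * μ := le_of_mul_le_mul_right hkey hρ
  nlinarith [mul_le_mul_of_nonneg_left (hgap ψ hψ) (mul_nonneg hsin0 (sub_nonneg.mpr hμ1))]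

section Center

variable {I : Finset (Pt 2)} {c' : Pt 2} {r : ℝ}

lemma sin_mul_abs_inner_dir_le_of_long_arc (hodd : Odd I.card) (hn : 2 ≤ I.card)
    (hc' : ∀ a b, IsLimitingMedianHyperplane I a b → |⟪a, c'⟫ - b| ≤ r)
    {p₀ p : Pt 2} {s t φ : ℝ} (hp₀ : p₀ ∈ I) (harc : IsPivotArc I p₀ s t)
    (hlong : 2 * π / 3 < t - s) (hp : p ∈ I) (hφ : IsMedianAt I p φ)
    (hφp₀ : ⟪dir φ, p₀⟫ ≠ ⟪dir φ, p⟫) :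
    sin ((t - s) / 2) * |⟪dir φ, c' - p⟫| ≤ r ∧ ∃ k : ℤ, φ - k * π ∈ Set.Icc t (s + π) := by
  obtain ⟨d, u, hdφ, hφu, harc'⟩ := exists_isPivotArc hn hp hφ
  obtain ⟨k, hkd, hku⟩ := harc'.exists_int_mul_pi_le_and_le hodd ⟨hdφ, hφu⟩ hp₀
    (by linarith [pi_pos]) harc.isMedianAt hφp₀
  refine ⟨le_trans ?_ (harc'.cos_mul_abs_inner_dir_le hp hc' ⟨hdφ, hφu⟩), k, by linarith,
    by linarith⟩
  gcongr
  rw [← cos_pi_div_two_sub]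
  exact cos_le_cos_of_nonneg_of_le_pi (by linarith) (by linarith [harc.sub_le_pi]) (by linarith)

lemma exists_center_of_long_arc (hodd : Odd I.card) (hn : 2 ≤ I.card) (hr : 0 ≤ r)
    (hc' : ∀ a b, IsLimitingMedianHyperplane I a b → |⟪a, c'⟫ - b| ≤ r)
    {p₀ : Pt 2} {s t : ℝ} (hp₀ : p₀ ∈ I) (harc : IsPivotArc I p₀ s t)
    (hlong : 2 * π / 3 < t - s) :
    ∃ c, ∀ p ∈ I, ∀ φ, IsMedianAt I p φ → |⟪dir φ, c - p⟫| ≤ 2 * r := by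
  have hst : s ≤ t := by linarith [pi_pos]
  obtain ⟨μ, hμ0, hμ1, hμv, hμgap⟩ := exists_shrink_factor hr hlong harc.sub_le_pi
    (abs_inner_dir_sub_le_of_limiting hc' hp₀ (harc.isMedianAt s ⟨le_rfl, hst⟩)
      harc.exists_ne_left)
    (abs_inner_dir_sub_le_of_limiting hc' hp₀ (harc.isMedianAt t ⟨hst, le_rfl⟩)
      harc.exists_ne_right)
  have hsin : 0 < sin ((t - s) / 2) :=
    sin_pos_of_pos_of_lt_pi (by linarith [pi_pos]) (by linarith [pi_pos, harc.sub_le_pi])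
  refine ⟨p₀ + μ • (c' - p₀), fun p hp φ hφ => ?_⟩
  by_cases hφp₀ : ⟪dir φ, p₀⟫ = ⟪dir φ, p⟫
  · rw [inner_sub_right, ← hφp₀, inner_add_right, inner_smul_right, add_sub_cancel_left,
      abs_mul, abs_of_nonneg hμ0]
    calc μ * |⟪dir φ, c' - p₀⟫| ≤ μ * ‖c' - p₀‖ := by
          gcongr
          simpa [norm_dir] using abs_real_inner_le_norm (dir φ) (c' - p₀)
      _ ≤ 2 * r := hμv
  obtain ⟨hφc', k, hk⟩ :=
    sin_mul_abs_inner_dir_le_of_long_arc hodd hn hc' hp₀ harc hlong hp hφ hφp₀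
  have hper : |⟪dir φ, c' - p₀⟫| = |⟪dir (φ - k * π), c' - p₀⟫| := by
    have : Function.Periodic (fun θ => |⟪dir θ, c' - p₀⟫|) π := fun θ => by
      simp [dir_antiperiodic θ]
    exact (this.sub_int_mul_eq k).symm
  have hsplit : p₀ + μ • (c' - p₀) - p = (c' - p) - (1 - μ) • (c' - p₀) := by module
  refine le_of_mul_le_mul_left ?_ hsin
  calc sin ((t - s) / 2) * |⟪dir φ, p₀ + μ • (c' - p₀) - p⟫|
      ≤ sin ((t - s) / 2) * |⟪dir φ, c' - p⟫|
        + sin ((t - s) / 2) * ((1 - μ) * |⟪dir (φ - k * π), c' - p₀⟫|) := by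
        rw [hsplit, inner_sub_right, inner_smul_right, ← hper, ← mul_add]
        gcongr
        refine (abs_sub _ _).trans_eq ?_
        rw [abs_mul, abs_of_nonneg (sub_nonneg.mpr hμ1)]
    _ ≤ r + sin ((t - s) / 2) * ((1 - μ) * |⟪dir (φ - k * π), c' - p₀⟫|) := by gcongr
    _ ≤ sin ((t - s) / 2) * (2 * r) := by linarith [hμgap _ hk]

end Center

lemma IsMedianHyperplane.abs_le_sum_norm {k : ℕ} {I : Finset (Pt k)} {a : Pt k} {b : ℝ}
    (hodd : Odd I.card) (h : IsMedianHyperplane I a b) : |b| ≤ ∑ x ∈ I, ‖x‖ := by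
  obtain ⟨p, hp, rfl⟩ := h.exists_mem_inner_eq hodd
  calc |⟪a, p⟫| ≤ ‖p‖ := by simpa [h.1] using abs_real_inner_le_norm a p
    _ ≤ ∑ x ∈ I, ‖x‖ := Finset.single_le_sum (fun x _ => norm_nonneg x) hp

lemma forall_isMedianHyperplane_of_forall_isMedianAt {I : Finset (Pt 2)} {c : Pt 2} {R : ℝ}
    (hodd : Odd I.card) (h : ∀ p ∈ I, ∀ φ, IsMedianAt I p φ → |⟪dir φ, c - p⟫| ≤ R) :
    ∀ a b, IsMedianHyperplane I a b → |⟪a, c⟫ - b| ≤ R := by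
  intro a b hab
  obtain ⟨φ, rfl⟩ := exists_eq_dir hab.1
  obtain ⟨p, hp, rfl⟩ := hab.exists_mem_inner_eq hodd
  simpa [inner_sub_right] using h p hp φ hab

theorem exists_center_of_forall_limiting {I : Finset (Pt 2)} {c' : Pt 2} {r : ℝ}
    (hodd : Odd I.card) (hr : 0 ≤ r)
    (hc' : ∀ a b, IsLimitingMedianHyperplane I a b → |⟪a, c'⟫ - b| ≤ r) :
    ∃ c, ∀ a b, IsMedianHyperplane I a b → |⟪a, c⟫ - b| ≤ 2 * r := by
  suffices ∃ c, ∀ p ∈ I, ∀ φ, IsMedianAt I p φ → |⟪dir φ, c - p⟫| ≤ 2 * r by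
    obtain ⟨c, hc⟩ := this
    exact ⟨c, forall_isMedianHyperplane_of_forall_isMedianAt hodd hc⟩
  rcases Nat.lt_or_ge I.card 2 with hn | hn
  · obtain ⟨p₀, hI⟩ := Finset.card_eq_one.mp (show I.card = 1 by obtain ⟨j, hj⟩ := hodd; omega)
    refine ⟨p₀, fun p hp φ _ => ?_⟩
    rw [hI, Finset.mem_singleton] at hp
    simp [hp, hr]
  by_cases hlong : ∃ p₀ ∈ I, ∃ s t, IsPivotArc I p₀ s t ∧ 2 * π / 3 < t - s
  · obtain ⟨p₀, hp₀, s, t, harc, hst⟩ := hlong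
    exact exists_center_of_long_arc hodd hn hr hc' hp₀ harc hst
  push Not at hlong
  refine ⟨c', fun p hp φ hφ => ?_⟩
  obtain ⟨d, u, hdφ, hφu, harc⟩ := exists_isPivotArc hn hp hφ
  have hcos : 1 / 2 ≤ cos ((u - d) / 2) := by
    rw [← cos_pi_div_three]
    exact cos_le_cos_of_nonneg_of_le_pi (by linarith) (by linarith [pi_pos])
      (by linarith [hlong p hp d u harc])
  nlinarith [harc.cos_mul_abs_inner_dir_le hp hc' ⟨hdφ, hφu⟩, abs_nonneg ⟪dir φ, c' - p⟫]

/-- For a finite set `I ⊆ ℝ²` with `|I|` odd, the LP yolk radius of `I`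
is at least one half of the yolk radius of `I`. -/
theorem lp_yolk_radius_ge_half_yolk_radius (I : Finset (Pt 2)) (hodd : Odd I.card) :
    yolkRadius I / 2 ≤ lpYolkRadius I := by
  refine le_csInf ⟨∑ x ∈ I, ‖x‖, by positivity, 0, fun a b hab => ?_⟩ ?_
  · simpa using hab.1.abs_le_sum_norm hodd
  rintro r ⟨hr, c', hc'⟩
  obtain ⟨c, hc⟩ := exists_center_of_forall_limiting hodd hr hc'
  have : yolkRadius I ≤ 2 * r := csInf_le ⟨0, fun _ h => h.1⟩ ⟨by positivity, c, hc⟩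
  linarith
end
end

section
/- Let ℋ be a nonempty compact set of hyperplanes in ℝ^k, let c ∈ ℝ^k and r ≥ 0, and suppose the closed ball B(c,r) intersects every hyperplane in ℋ. Then the following are equivalent: (i) every closed ball intersecting every hyperplane in ℋ has radius at least r (i.e., B(c,r) is a smallest ball intersecting every hyperplane in ℋ); (ii) for every unit vector α ∈ ℝ^k there exists a hyperplane (a,b) ∈ ℋ tangent to the α-hemisphere He(α,c,r). -/
open scoped RealInnerProductSpace
open Real

noncomputable section

/-!
Write `s_p(x) = ⟪a, x⟫ - b` for the signed distance from `x` to `p = (a, b)`. The point of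
tangency of `p` lies in the `α`-hemisphere iff `s_p(c) ⟪a, α⟫ ≤ 0`, and moving the centre to
`c - T α` changes `s_p` by `-T ⟪a, α⟫`. If every hemisphere has a tangent hyperplane, take `α`
pointing from `c'` to `c`: the tangent hyperplane of the `α`-hemisphere then satisfies
`|s_p(c')| ≥ |s_p(c)| = r`. Conversely, if the `α`-hemisphere has none, every tangent hyperplane
has `s_p(c) ⟪a, α⟫ > 0`, so moving the centre to `c - ε α` decreases `|s_p|` below `r` near the
tangent hyperplanes; compactness of `ℋ` makes one `ε` work for all of `ℋ`, and the maximum of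
`|s_p(c - ε α)|` over `ℋ` is then a radius smaller than `r`.
-/

lemma abs_le_abs_sub_of_mul_nonpos {s u : ℝ} (h : s * u ≤ 0) : |s| ≤ |s - u| :=
  sq_le_sq.mp (by nlinarith [sq_nonneg u])

lemma abs_sub_mul_lt_of_le_max {r s t δ ε : ℝ} (hs : |s| ≤ r) (ht : |t| ≤ 1)
    (hδ : δ ≤ max (r ^ 2 - s ^ 2) (s * t)) (hε : 0 < ε) (hε_le_one : ε ≤ 1)
    (hεδ : ε * (2 * r + 1) < δ) : |s - ε * t| < r := by
  have hr : 0 ≤ r := (abs_nonneg s).trans hs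
  have hs2 : s ^ 2 ≤ r ^ 2 := sq_le_sq' (abs_le.mp hs).1 (abs_le.mp hs).2
  have ht2 : t ^ 2 ≤ 1 := by nlinarith [sq_abs t, abs_nonneg t]
  have hεt : ε ^ 2 * t ^ 2 ≤ ε ^ 2 := mul_le_of_le_one_right (sq_nonneg ε) ht2
  refine abs_lt_of_sq_lt_sq ?_ hr
  rcases le_max_iff.mp hδ with hδ | hδ
  · have hst : -(s * t) ≤ r := by
      nlinarith [neg_abs_le (s * t), abs_mul s t, abs_nonneg s, abs_nonneg t]
    nlinarith
  · nlinarith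

lemma IsCompact.exists_pos_forall_abs_sub_mul_lt {X : Type*} [TopologicalSpace X] {K : Set X}
    (hK : IsCompact K) {s t : X → ℝ} (hs : ContinuousOn s K) (ht : ContinuousOn t K) {r : ℝ}
    (hsr : ∀ x ∈ K, |s x| ≤ r) (ht1 : ∀ x ∈ K, |t x| ≤ 1)
    (hpos : ∀ x ∈ K, |s x| = r → 0 < s x * t x) :
    ∃ ε > 0, ∀ x ∈ K, |s x - ε * t x| < r := by
  rcases K.eq_empty_or_nonempty with rfl | ⟨x₀, hx₀⟩
  · exact ⟨1, one_pos, by simp⟩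
  have hr : 0 ≤ r := (abs_nonneg _).trans (hsr x₀ hx₀)
  have hmax_pos : ∀ x ∈ K, 0 < max (r ^ 2 - s x ^ 2) (s x * t x) := by
    intro x hx
    rcases (hsr x hx).lt_or_eq with hlt | heq
    · exact lt_max_of_lt_left (by nlinarith [sq_abs (s x), abs_nonneg (s x)])
    · exact lt_max_of_lt_right (hpos x hx heq)
  obtain ⟨δ, hδ, hδle⟩ := hK.exists_forall_le'
    ((continuousOn_const.sub (hs.pow 2)).sup (hs.mul ht)) hmax_pos
  refine ⟨δ / (2 * r + 1 + δ), by positivity, fun x hx => ?_⟩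
  refine abs_sub_mul_lt_of_le_max (hsr x hx) (ht1 x hx) (hδle x hx) (by positivity) ?_ ?_
  · rw [div_le_one (by positivity)]; linarith
  · rw [div_mul_eq_mul_div, div_lt_iff₀ (by positivity)]; nlinarith

section InnerProductSpace

variable {E : Type*} [NormedAddCommGroup E] [InnerProductSpace ℝ E]

lemma exists_norm_eq_one_and_eq_smul [Nontrivial E] (v : E) :
    ∃ α : E, ‖α‖ = 1 ∧ v = ‖v‖ • α := by
  rcases eq_or_ne v 0 with rfl | hv
  · obtain ⟨α, hα⟩ := exists_norm_eq E zero_le_one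
    exact ⟨α, hα, by simp⟩
  · refine ⟨‖v‖⁻¹ • v, norm_smul_inv_norm hv, ?_⟩
    rw [smul_smul, mul_inv_cancel₀ (norm_ne_zero_iff.mpr hv), one_smul]

lemma inner_le_inner_add_smul_iff_mul_nonpos (α a x : E) (b : ℝ) :
    ⟪α, x⟫ ≤ ⟪α, x + (b - ⟪a, x⟫) • a⟫ ↔ (⟪a, x⟫ - b) * ⟪a, α⟫ ≤ 0 := by
  rw [inner_add_right, real_inner_smul_right, real_inner_comm α a]
  constructor <;> intro h <;> linarith

lemma le_of_forall_exists_tangent_mul_nonpos [Nontrivial E] {H : Set (E × ℝ)} {c : E} {r : ℝ}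
    (htan : ∀ α : E, ‖α‖ = 1 → ∃ p ∈ H, |⟪p.1, c⟫ - p.2| = r ∧ (⟪p.1, c⟫ - p.2) * ⟪p.1, α⟫ ≤ 0)
    {c' : E} {r' : ℝ} (hmeets : ∀ p ∈ H, |⟪p.1, c'⟫ - p.2| ≤ r') : r ≤ r' := by
  obtain ⟨α, hα, hcc'⟩ := exists_norm_eq_one_and_eq_smul (c - c')
  obtain ⟨p, hp, hpr, hpα⟩ := htan α hα
  have hc' : ⟪p.1, c'⟫ - p.2 = (⟪p.1, c⟫ - p.2) - ‖c - c'‖ * ⟪p.1, α⟫ := by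
    rw [← real_inner_smul_right, ← hcc', inner_sub_right]; ring
  calc r = |⟪p.1, c⟫ - p.2| := hpr.symm
    _ ≤ |⟪p.1, c'⟫ - p.2| := by
      rw [hc']
      refine abs_le_abs_sub_of_mul_nonpos ?_
      rw [mul_left_comm]
      exact mul_nonpos_of_nonneg_of_nonpos (norm_nonneg _) hpα
    _ ≤ r' := hmeets p hp

lemma exists_lt_of_forall_tangent_mul_pos {H : Set (E × ℝ)} (hH : IsCompact H)
    (hunit : ∀ p ∈ H, ‖p.1‖ = 1) {c : E} {r : ℝ} (hmeets : ∀ p ∈ H, |⟪p.1, c⟫ - p.2| ≤ r)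
    {α : E} (hα : ‖α‖ = 1)
    (htan : ∀ p ∈ H, |⟪p.1, c⟫ - p.2| = r → 0 < (⟪p.1, c⟫ - p.2) * ⟪p.1, α⟫) :
    ∃ (c' : E) (r' : ℝ), r' < r ∧ ∀ p ∈ H, |⟪p.1, c'⟫ - p.2| ≤ r' := by
  have hα_le : ∀ p ∈ H, |⟪p.1, α⟫| ≤ 1 := fun p hp => by
    simpa [hunit p hp, hα] using abs_real_inner_le_norm p.1 α
  obtain ⟨ε, -, hε⟩ := hH.exists_pos_forall_abs_sub_mul_lt (by fun_prop) (by fun_prop) hmeets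
    hα_le htan
  have hshift (p : E × ℝ) : ⟪p.1, c - ε • α⟫ - p.2 = (⟪p.1, c⟫ - p.2) - ε * ⟪p.1, α⟫ := by
    rw [inner_sub_right, real_inner_smul_right]; ring
  obtain ⟨η, hη, hηle⟩ := hH.exists_forall_le' (a := 0)
    (f := fun p => r - |⟪p.1, c - ε • α⟫ - p.2|) (by fun_prop)
    fun p hp => sub_pos.mpr (by rw [hshift]; exact hε p hp)
  exact ⟨c - ε • α, r - η, by linarith, fun p hp => by linarith [hηle p hp]⟩

end InnerProductSpace

theorem smallest_ball_iff_hemispheres_covered_general {k : ℕ} (H : Set (Pt k × ℝ))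
    (hne : H.Nonempty) (hunit : ∀ p ∈ H, ‖p.1‖ = 1) (hcomp : IsCompact H)
    (c : Pt k) (r : ℝ)
    (hmeets : ∀ p ∈ H, |⟪p.1, c⟫ - p.2| ≤ r) :
    (∀ (c' : Pt k) (r' : ℝ), (∀ p ∈ H, |⟪p.1, c'⟫ - p.2| ≤ r') → r ≤ r') ↔
      (∀ α : Pt k, ‖α‖ = 1 → ∃ p ∈ H, |⟪p.1, c⟫ - p.2| = r ∧
        ⟪α, c⟫ ≤ ⟪α, c + (p.2 - ⟪p.1, c⟫) • p.1⟫) := by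
  simp only [inner_le_inner_add_smul_iff_mul_nonpos]
  constructor
  · intro hmin α hα
    by_contra! htan
    obtain ⟨c', r', hr', hball⟩ := exists_lt_of_forall_tangent_mul_pos hcomp hunit hmeets hα htan
    exact hr'.not_ge (hmin c' r' hball)
  · obtain ⟨p, hp⟩ := hne
    have : Nontrivial (Pt k) := nontrivial_of_ne p.1 0 (norm_ne_zero_iff.mp (by simp [hunit p hp]))
    exact fun hcov c' r' => le_of_forall_exists_tangent_mul_nonpos hcov

/-- Let `ℋ` be a nonempty compact set of hyperplanes (pairs `(a,b)` with
`‖a‖ = 1`) in `ℝ^k`, and suppose `B(c,r)` intersects every hyperplane of `ℋ`. Then `B(c,r)`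
is a smallest ball intersecting every hyperplane of `ℋ` iff every `α`-hemisphere of
`B(c,r)` (for unit `α`) has a tangent hyperplane in `ℋ`, i.e. some `(a,b) ∈ ℋ` with
`|⟪a,c⟫ - b| = r` whose point of tangency `c + (b - ⟪a,c⟫)·a` lies in `He(α,c,r)`. -/
theorem smallest_ball_iff_hemispheres_covered {k : ℕ} (H : Set (Pt k × ℝ))
    (hne : H.Nonempty) (hunit : ∀ p ∈ H, ‖p.1‖ = 1) (hcomp : IsCompact H)
    (c : Pt k) (r : ℝ) (hr : 0 ≤ r)
    (hmeets : ∀ p ∈ H, |⟪p.1, c⟫ - p.2| ≤ r) :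
    (∀ (c' : Pt k) (r' : ℝ), (∀ p ∈ H, |⟪p.1, c'⟫ - p.2| ≤ r') → r ≤ r') ↔
      (∀ α : Pt k, ‖α‖ = 1 → ∃ p ∈ H, |⟪p.1, c⟫ - p.2| = r ∧
        ⟪α, c⟫ ≤ ⟪α, c + (p.2 - ⟪p.1, c⟫) • p.1⟫) :=
  smallest_ball_iff_hemispheres_covered_general H hne hunit hcomp c r hmeets
end
end

section
/- Let I ⊆ ℝ² be a finite set of ideal points, let p = (p₁,p₂) ∈ I, let θ₀ ∈ ℝ and ν ≥ 0. Suppose H_p(θ₀) is a median hyperplane for I, and suppose that for every θ with 0 ≤ θ < ν the line H_p(θ₀+θ) contains at most one point of I. Then H_p(θ₀+θ) is a median hyperplane for I for every θ ∈ [0, ν]. -/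
open scoped RealInnerProductSpace
open Real

noncomputable section

/-- The unit normal `(cos θ, sin θ)` of the rotating line. -/
def rotNormal (θ : ℝ) : Pt 2 := WithLp.toLp 2 ![Real.cos θ, Real.sin θ]

/-- The offset of the line through `p` with unit normal `(cos θ, sin θ)`, so that
`H_p(θ) = H(rotNormal θ, rotOffset p θ)` is the line through `p` rotating about `p`
as `θ` varies. -/
def rotOffset (p : Pt 2) (θ : ℝ) : ℝ := p 0 * Real.cos θ + p 1 * Real.sin θ

/-! A point `q ≠ p` of `I` never meets the rotating line on `[0, ν)`, since the line always
contains `p` and at most one point of `I`. By the intermediate value theorem the sign of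
`⟪rotNormal (θ₀ + θ), q - p⟫` is therefore constant on `[0, ν]` (weakly at `θ = ν`), so each
closed side of `H_p(θ₀)` only gains points of `I` as the line rotates. -/

open Set

section IntermediateValue

variable {α δ : Type*} [ConditionallyCompleteLinearOrder α] [TopologicalSpace α] [OrderTopology α]
  [DenselyOrdered α] [LinearOrder δ] [TopologicalSpace δ] [OrderClosedTopology δ]
  {f : α → δ} {a x : α} {c : δ}

theorem ContinuousOn.le_of_forall_ne (hf : ContinuousOn f (Icc a x)) (hax : a ≤ x)
    (hne : ∀ t ∈ Ico a x, f t ≠ c) (ha : f a ≤ c) : f x ≤ c := by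
  by_contra! hx
  obtain ⟨t, ht, hft⟩ := intermediate_value_Icc hax hf ⟨ha, hx.le⟩
  have htx : t ≠ x := by rintro rfl; exact hx.ne' hft
  exact hne t ⟨ht.1, ht.2.lt_of_ne htx⟩ hft

theorem ContinuousOn.ge_of_forall_ne (hf : ContinuousOn f (Icc a x)) (hax : a ≤ x)
    (hne : ∀ t ∈ Ico a x, f t ≠ c) (ha : c ≤ f a) : c ≤ f x :=
  ContinuousOn.le_of_forall_ne (δ := δᵒᵈ) hf hax hne ha

end IntermediateValue

theorem inner_rotNormal (θ : ℝ) (q : Pt 2) :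
    ⟪rotNormal θ, q⟫ = Real.cos θ * q 0 + Real.sin θ * q 1 := by
  simp [rotNormal, PiLp.inner_apply, Fin.sum_univ_two]
  ring

theorem inner_rotNormal_self (θ : ℝ) (p : Pt 2) : ⟪rotNormal θ, p⟫ = rotOffset p θ := by
  rw [inner_rotNormal, rotOffset]
  ring

theorem norm_rotNormal (θ : ℝ) : ‖rotNormal θ‖ = 1 := by
  simp [rotNormal, EuclideanSpace.norm_eq, Fin.sum_univ_two]

theorem continuous_inner_rotNormal (v : Pt 2) : Continuous fun θ => ⟪rotNormal θ, v⟫ := by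
  simp only [inner_rotNormal]
  fun_prop

section RotatingLine

variable {I : Finset (Pt 2)} {p : Pt 2} {θ₀ ν : ℝ}

theorem inner_rotNormal_sub_ne_zero (hp : p ∈ I)
    (hone : ∀ θ : ℝ, 0 ≤ θ → θ < ν →
      (I.filter fun q => ⟪rotNormal (θ₀ + θ), q⟫ = rotOffset p (θ₀ + θ)).card ≤ 1)
    {q : Pt 2} (hq : q ∈ I) (hqp : q ≠ p) {θ : ℝ} (hθ : θ ∈ Ico 0 ν) :
    ⟪rotNormal (θ₀ + θ), q - p⟫ ≠ 0 := by
  intro hzero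
  rw [inner_sub_right, sub_eq_zero, inner_rotNormal_self _ p] at hzero
  refine hqp (Finset.card_le_one.mp (hone θ hθ.1 hθ.2) q ?_ p ?_)
  · exact Finset.mem_filter.mpr ⟨hq, hzero⟩
  · exact Finset.mem_filter.mpr ⟨hp, inner_rotNormal_self _ _⟩

variable (hp : p ∈ I)
  (hone : ∀ θ : ℝ, 0 ≤ θ → θ < ν →
    (I.filter fun q => ⟪rotNormal (θ₀ + θ), q⟫ = rotOffset p (θ₀ + θ)).card ≤ 1)
  {θ : ℝ} (hθ : θ ∈ Icc 0 ν)
include hp hone hθ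

theorem filter_inner_rotNormal_le_subset :
    (I.filter fun q => ⟪rotNormal θ₀, q⟫ ≤ rotOffset p θ₀) ⊆
      I.filter fun q => ⟪rotNormal (θ₀ + θ), q⟫ ≤ rotOffset p (θ₀ + θ) := by
  intro q hq
  rw [Finset.mem_filter, ← inner_rotNormal_self, ← sub_nonpos, ← inner_sub_right] at hq ⊢
  refine ⟨hq.1, ?_⟩
  rcases eq_or_ne q p with rfl | hqp
  · simp
  refine (continuous_inner_rotNormal (q - p)).comp_continuousOn
    (continuous_const_add θ₀).continuousOn |>.le_of_forall_ne hθ.1 ?_ (by simpa using hq.2)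
  exact fun t ht => inner_rotNormal_sub_ne_zero hp hone hq.1 hqp ⟨ht.1, ht.2.trans_le hθ.2⟩

theorem filter_rotOffset_le_inner_rotNormal_subset :
    (I.filter fun q => rotOffset p θ₀ ≤ ⟪rotNormal θ₀, q⟫) ⊆
      I.filter fun q => rotOffset p (θ₀ + θ) ≤ ⟪rotNormal (θ₀ + θ), q⟫ := by
  intro q hq
  rw [Finset.mem_filter, ← inner_rotNormal_self, ← sub_nonneg, ← inner_sub_right] at hq ⊢
  refine ⟨hq.1, ?_⟩
  rcases eq_or_ne q p with rfl | hqp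
  · simp
  refine (continuous_inner_rotNormal (q - p)).comp_continuousOn
    (continuous_const_add θ₀).continuousOn |>.ge_of_forall_ne hθ.1 ?_ (by simpa using hq.2)
  exact fun t ht => inner_rotNormal_sub_ne_zero hp hone hq.1 hqp ⟨ht.1, ht.2.trans_le hθ.2⟩

end RotatingLine

theorem rotating_median_hyperplane_general (I : Finset (Pt 2)) (p : Pt 2) (hp : p ∈ I)
    (θ₀ ν : ℝ)
    (hmed : IsMedianHyperplane I (rotNormal θ₀) (rotOffset p θ₀))
    (hone : ∀ θ : ℝ, 0 ≤ θ → θ < ν →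
      (I.filter fun q => ⟪rotNormal (θ₀ + θ), q⟫ = rotOffset p (θ₀ + θ)).card ≤ 1) :
    ∀ θ ∈ Set.Icc (0 : ℝ) ν,
      IsMedianHyperplane I (rotNormal (θ₀ + θ)) (rotOffset p (θ₀ + θ)) := by
  intro θ hθ
  refine ⟨norm_rotNormal _, hmed.2.1.trans ?_, hmed.2.2.trans ?_⟩
  · exact_mod_cast Finset.card_le_card (filter_inner_rotNormal_le_subset hp hone hθ)
  · exact_mod_cast Finset.card_le_card (filter_rotOffset_le_inner_rotNormal_subset hp hone hθ)

/-- Let `p ∈ I ⊆ ℝ²`. If `H_p(θ₀)` is a median hyperplane for `I`, and for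
every `0 ≤ θ < ν` the line `H_p(θ₀+θ)` contains at most one point of `I`, then `H_p(θ₀+θ)`
is a median hyperplane for `I` for every `θ ∈ [0, ν]`. -/
theorem rotating_median_hyperplane (I : Finset (Pt 2)) (p : Pt 2) (hp : p ∈ I)
    (θ₀ ν : ℝ) (hν : 0 ≤ ν)
    (hmed : IsMedianHyperplane I (rotNormal θ₀) (rotOffset p θ₀))
    (hone : ∀ θ : ℝ, 0 ≤ θ → θ < ν →
      (I.filter fun q => ⟪rotNormal (θ₀ + θ), q⟫ = rotOffset p (θ₀ + θ)).card ≤ 1) :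
    ∀ θ ∈ Set.Icc (0 : ℝ) ν,
      IsMedianHyperplane I (rotNormal (θ₀ + θ)) (rotOffset p (θ₀ + θ)) :=
  rotating_median_hyperplane_general I p hp θ₀ ν hmed hone
end
end

section
/- Let I ⊆ ℝ² be a finite set of ideal points, let B(c,r) be a yolk of I with r > 0, and let (a,b) be a median hyperplane of I tangent to B(c,r). If the line H(a,b) contains exactly one point of I, then that point equals the point of tangency c + (b − ⟪a,c⟫)·a. -/
open scoped RealInnerProductSpace
open Real

noncomputable section

/- If the only ideal point `q` on the tangent line were not the point of tangency, the line could
be turned slightly about `q`, tilting its normal towards the offset of `c - q` along the line.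
For a small enough turn no other ideal point changes sides, so the line stays median, while its
distance to `c` grows beyond `r`; the yolk would then miss a median line. -/

open Filter Topology

section InnerProductSpace

variable {E : Type*} [NormedAddCommGroup E] [InnerProductSpace ℝ E]

lemma inner_inv_norm_smul_sub_inner (n x y : E) :
    ⟪‖n‖⁻¹ • n, x⟫ - ⟪‖n‖⁻¹ • n, y⟫ = ‖n‖⁻¹ * ⟪n, x - y⟫ := by
  rw [real_inner_smul_left, real_inner_smul_left, inner_sub_right, mul_sub]

lemma eventually_sameSide_of_tendsto {α : Type*} {l : Filter α} {n : α → E} {a : E}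
    (hn : Tendsto n l (𝓝 a)) (S : Finset E) (q : E) :
    ∀ᶠ i in l, ∀ x ∈ S, (⟪a, x - q⟫ < 0 → ⟪n i, x - q⟫ < 0) ∧
      (0 < ⟪a, x - q⟫ → 0 < ⟪n i, x - q⟫) := by
  refine (Filter.eventually_all_finset S).2 fun x _ => ?_
  have hlim : Tendsto (fun i => ⟪n i, x - q⟫) l (𝓝 ⟪a, x - q⟫) :=
    hn.inner tendsto_const_nhds
  rcases lt_trichotomy ⟪a, x - q⟫ 0 with hneg | hzero | hpos
  · filter_upwards [hlim.eventually_lt_const hneg] with i hi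
    exact ⟨fun _ => hi, fun h => absurd h hneg.not_gt⟩
  · exact Eventually.of_forall fun i => by simp [hzero]
  · filter_upwards [hlim.eventually_const_lt hpos] with i hi
    exact ⟨fun h => absurd h hpos.not_gt, fun _ => hi⟩

/-- `|⟪n, v⟫| / ‖n‖` is the distance from `v` to the hyperplane `n⊥`: tilting the unit normal `a`
towards the component `w ⟂ a` of `v = s • a + w`, with the sign of `s`, pushes `a⊥` away from `v`. -/
lemma eventually_abs_mul_norm_lt_abs_inner_tilt {a w : E} {s : ℝ} (ha : ‖a‖ = 1)
    (haw : ⟪a, w⟫ = 0) (hw : w ≠ 0) (hs : s ≠ 0) :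
    ∀ᶠ ε in 𝓝[>] (0 : ℝ), |s| * ‖a + (ε * s) • w‖ < |⟪a + (ε * s) • w, s • a + w⟫| := by
  set W := ‖w‖ ^ 2
  have hW : 0 < W := by positivity
  have hinner (ε : ℝ) : ⟪a + (ε * s) • w, s • a + w⟫ = s * (1 + ε * W) := by
    simp only [inner_add_left, inner_add_right, real_inner_smul_left, real_inner_smul_right,
      real_inner_self_eq_norm_sq, ha, real_inner_comm a w ▸ haw, haw, W]
    ring
  have hnorm (ε : ℝ) : ‖a + (ε * s) • w‖ ^ 2 = 1 + (ε * s) ^ 2 * W := by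
    rw [norm_add_sq_real, real_inner_smul_right, haw, norm_smul, ha, Real.norm_eq_abs,
      mul_pow, sq_abs]
    ring
  have hsmall : ∀ᶠ ε in 𝓝[>] (0 : ℝ), 0 < 2 + ε * (W - s ^ 2) := by
    have hlim : Tendsto (fun ε : ℝ => 2 + ε * (W - s ^ 2)) (𝓝 0) (𝓝 (2 + 0 * (W - s ^ 2))) :=
      tendsto_const_nhds.add (tendsto_id.mul_const _)
    rw [zero_mul, add_zero] at hlim
    exact nhdsWithin_le_nhds (hlim.eventually_const_lt two_pos)
  filter_upwards [self_mem_nhdsWithin, hsmall] with ε (hε : 0 < ε) hε2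
  rw [hinner, ← abs_norm, ← abs_mul, ← sq_lt_sq, mul_pow, hnorm]
  have hgain : 0 < s ^ 2 * ε * W * (2 + ε * (W - s ^ 2)) := by positivity
  nlinarith [hgain]

end InnerProductSpace

section MedianHyperplane

variable {k : ℕ} {I : Finset (Pt k)}

lemma IsMedianHyperplane.of_sides {a a' : Pt k} {b b' : ℝ} (h : IsMedianHyperplane I a b)
    (ha' : ‖a'‖ = 1) (hle : ∀ x ∈ I, ⟪a, x⟫ ≤ b → ⟪a', x⟫ ≤ b')
    (hge : ∀ x ∈ I, b ≤ ⟪a, x⟫ → b' ≤ ⟪a', x⟫) : IsMedianHyperplane I a' b' := by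
  obtain ⟨-, hlow, hhigh⟩ := h
  have hmono {p p' : Pt k → Prop} [DecidablePred p] [DecidablePred p']
      (hpp' : ∀ x ∈ I, p x → p' x) : ((I.filter p).card : ℝ) ≤ (I.filter p').card :=
    Nat.cast_le.2 <| Finset.card_le_card fun x hx => by
      rw [Finset.mem_filter] at hx ⊢
      exact ⟨hx.1, hpp' x hx.1 hx.2⟩
  exact ⟨ha', hlow.trans (hmono hle), hhigh.trans (hmono hge)⟩

lemma IsMedianHyperplane.of_sameSide {a n q : Pt k} {b : ℝ} (h : IsMedianHyperplane I a b)
    (hq : ⟪a, q⟫ = b) (huniq : ∀ x ∈ I, ⟪a, x⟫ = b → x = q) (hn : n ≠ 0)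
    (hside : ∀ x ∈ I, (⟪a, x - q⟫ < 0 → ⟪n, x - q⟫ < 0) ∧ (0 < ⟪a, x - q⟫ → 0 < ⟪n, x - q⟫)) :
    IsMedianHyperplane I (‖n‖⁻¹ • n) ⟪‖n‖⁻¹ • n, q⟫ := by
  have hsub (x : Pt k) : ⟪a, x - q⟫ = ⟪a, x⟫ - b := by rw [inner_sub_right, hq]
  have hn' (x : Pt k) := inner_inv_norm_smul_sub_inner n x q
  have hinv : 0 < ‖n‖⁻¹ := inv_pos.2 (norm_pos_iff.2 hn)
  refine h.of_sides (norm_smul_inv_norm hn) (fun x hx hxb => ?_) (fun x hx hxb => ?_)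
  · rcases hxb.eq_or_lt with hxb | hxb
    · rw [huniq x hx hxb]
    · have := (hside x hx).1 (by linarith [hsub x])
      nlinarith [hn' x]
  · rcases hxb.eq_or_lt with hxb | hxb
    · rw [huniq x hx hxb.symm]
    · have := (hside x hx).2 (by linarith [hsub x])
      nlinarith [hn' x]

end MedianHyperplane

/-- Let `B(c,r)` be a yolk of `I ⊆ ℝ²` with `r > 0` and let `(a,b)` be a
median hyperplane of `I` tangent to `B(c,r)`. If the line `H(a,b)` contains exactly one
point of `I`, then that point is the point of tangency `c + (b - ⟪a,c⟫)·a`. -/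
theorem nonlimiting_tangent_at_ideal_point (I : Finset (Pt 2)) (c : Pt 2) (r : ℝ)
    (hyolk : IsYolk I c r) (hr : 0 < r) (a : Pt 2) (b : ℝ)
    (hmed : IsMedianHyperplane I a b) (htan : |⟪a, c⟫ - b| = r)
    (hone : (I.filter fun q => ⟪a, q⟫ = b).card = 1) :
    ∀ q ∈ I, ⟪a, q⟫ = b → q = c + (b - ⟪a, c⟫) • a := by
  intro q hqI hq
  set s := ⟪a, c⟫ - b
  set w := c - q - s • a
  have hcq : c - q = s • a + w := (add_sub_cancel _ _).symm
  have hs : s ≠ 0 := by rintro hs; rw [hs, abs_zero] at htan; exact hr.ne htan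
  have haw : ⟪a, w⟫ = 0 := by
    rw [inner_sub_right, inner_sub_right, real_inner_smul_right, real_inner_self_eq_norm_sq,
      hmed.1, hq]
    ring
  by_contra hne
  have hw : w ≠ 0 := by
    rintro hw
    rw [hw, add_zero] at hcq
    exact hne (by rw [← neg_sub, neg_smul, ← sub_eq_add_neg, ← hcq, sub_sub_cancel])
  have huniq : ∀ x ∈ I, ⟪a, x⟫ = b → x = q := fun x hx hxb =>
    Finset.card_le_one.1 hone.le x (by simp [hx, hxb]) q (by simp [hqI, hq])
  have htilt : Tendsto (fun ε : ℝ => a + (ε * s) • w) (𝓝[>] 0) (𝓝 a) :=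
    (Continuous.tendsto' (by fun_prop) 0 a (by simp)).mono_left nhdsWithin_le_nhds
  obtain ⟨ε, hside, hfar⟩ := ((eventually_sameSide_of_tendsto htilt I q).and
    (eventually_abs_mul_norm_lt_abs_inner_tilt hmed.1 haw hw hs)).exists
  set n := a + (ε * s) • w
  have hn : n ≠ 0 := by rintro hn; rw [hn, norm_zero, mul_zero] at hfar; simp at hfar
  have hmiss := hyolk.1 _ _ (hmed.of_sameSide hq huniq hn hside)
  rw [inner_inv_norm_smul_sub_inner, abs_mul, abs_inv, abs_norm, hcq, inv_mul_le_iff₀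
    (norm_pos_iff.2 hn), ← htan] at hmiss
  exact hfar.not_ge (by linarith)
end
end

section
/- Let k ≥ 2, let I' ⊆ ℝ^{k−1} be a finite set of ideal points, and let I = {(π, 0) : π ∈ I'} ⊆ ℝ^k be its embedding into the hyperplane {x ∈ ℝ^k : x_k = 0}. Then: (1) if (a,b) with a ∈ ℝ^{k−1}, ‖a‖₂ = 1 is a median hyperplane for I', then ((a,0), b) is a median hyperplane for I; and (2) the yolk radius of I is at least the yolk radius of I'. -/
open scoped RealInnerProductSpace
open Real

noncomputable section

/-- Embedding of `ℝ^n` into the hyperplane `{x ∈ ℝ^(n+1) : x_(n+1) = 0}`, appending a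
zero last coordinate. -/
def embLast {n : ℕ} (x : Pt n) : Pt (n + 1) := WithLp.toLp 2 (Fin.snoc (WithLp.ofLp x) 0)

/-! A linear isometry `f` carries median hyperplanes of `I` to median hyperplanes of `f '' I`,
because it is injective and preserves inner products. Conversely a ball `B(c, r)` meeting every
median hyperplane of `f '' I` gives the ball `B(f† c, r)` meeting every median hyperplane of `I`,
since `⟪a, f† c⟫ = ⟪f a, c⟫`. Comparing the infima needs a ball for `f '' I` to exist: for
`I ≠ ∅` the ball about `0` of radius `max ‖x‖` works, as a median hyperplane has points of `I`
on both sides; for `I = ∅` the yolk radius is the junk value `sInf ∅ = 0` (or `0` when `k = 0`). -/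

def medianBallRadii {k : ℕ} (I : Finset (Pt k)) : Set ℝ :=
  {r : ℝ | 0 ≤ r ∧ ∃ c : Pt k, ∀ a b, IsMedianHyperplane I a b → |⟪a, c⟫ - b| ≤ r}

theorem yolkRadius_nonneg {k : ℕ} (I : Finset (Pt k)) : 0 ≤ yolkRadius I :=
  Real.sInf_nonneg fun _ hr => hr.1

theorem isMedianHyperplane_empty {k : ℕ} {a : Pt k} (ha : ‖a‖ = 1) (b : ℝ) :
    IsMedianHyperplane ∅ a b := by
  simp [IsMedianHyperplane, ha]

theorem yolkRadius_empty (k : ℕ) : yolkRadius (∅ : Finset (Pt k)) = 0 := by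
  show sInf (medianBallRadii ∅) = 0
  rcases k.eq_zero_or_pos with rfl | hk
  · -- `ℝ^0` has no unit vector, hence no median hyperplane
    have hnone : ∀ a b, ¬ IsMedianHyperplane (∅ : Finset (Pt 0)) a b := fun a b h => by
      simpa [Subsingleton.elim a 0] using h.1
    exact IsLeast.csInf_eq ⟨⟨le_rfl, 0, fun a b h => (hnone a b h).elim⟩, fun _ hr => hr.1⟩
  · -- every hyperplane is a median hyperplane of `∅`, so no ball meets them all
    convert Real.sInf_empty
    refine Set.eq_empty_of_forall_notMem fun r ⟨hr, c, hc⟩ => ?_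
    set a : Pt k := EuclideanSpace.single ⟨0, hk⟩ 1
    have := hc a (⟪a, c⟫ - (r + 1)) (isMedianHyperplane_empty (by simp [a]) _)
    rw [sub_sub_cancel, abs_of_pos (by linarith)] at this
    linarith

theorem Finset.exists_mem_of_half_card_le_card_filter {α : Type*} {s : Finset α} {p : α → Prop}
    [DecidablePred p] (hs : s.Nonempty) (h : (s.card : ℝ) / 2 ≤ (s.filter p).card) :
    ∃ x ∈ s, p x := by
  have hhalf : (0 : ℝ) < s.card / 2 := by have := hs.card_pos; positivity
  obtain ⟨x, hx⟩ := Finset.card_pos.1 (by exact_mod_cast hhalf.trans_le h)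
  exact ⟨x, Finset.mem_filter.1 hx⟩

namespace IsMedianHyperplane

variable {k : ℕ} {I : Finset (Pt k)} {a : Pt k} {b : ℝ}

theorem exists_inner_le (h : IsMedianHyperplane I a b) (hI : I.Nonempty) : ∃ x ∈ I, ⟪a, x⟫ ≤ b :=
  Finset.exists_mem_of_half_card_le_card_filter hI h.2.1

theorem exists_le_inner (h : IsMedianHyperplane I a b) (hI : I.Nonempty) : ∃ x ∈ I, b ≤ ⟪a, x⟫ :=
  Finset.exists_mem_of_half_card_le_card_filter hI h.2.2

theorem abs_inner_sub_le {c : Pt k} {R : ℝ} (h : IsMedianHyperplane I a b) (hI : I.Nonempty)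
    (hR : ∀ x ∈ I, ‖x - c‖ ≤ R) : |⟪a, c⟫ - b| ≤ R := by
  have hbound : ∀ x ∈ I, |⟪a, x⟫ - ⟪a, c⟫| ≤ R := fun x hx => by
    rw [← inner_sub_right]
    exact (abs_real_inner_le_norm _ _).trans (by rw [h.1, one_mul]; exact hR x hx)
  obtain ⟨x, hxI, hx⟩ := h.exists_inner_le hI
  obtain ⟨y, hyI, hy⟩ := h.exists_le_inner hI
  have := abs_le.1 (hbound x hxI)
  have := abs_le.1 (hbound y hyI)
  rw [abs_le]
  constructor <;> linarith

theorem map {m : ℕ} (h : IsMedianHyperplane I a b) (f : Pt k →ₗᵢ[ℝ] Pt m) :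
    IsMedianHyperplane (I.image f) (f a) b := by
  simpa only [IsMedianHyperplane, Finset.filter_image,
    Finset.card_image_of_injective _ f.injective, f.norm_map, f.inner_map_map] using h

end IsMedianHyperplane

theorem medianBallRadii_nonempty {k : ℕ} {I : Finset (Pt k)} (hI : I.Nonempty) :
    (medianBallRadii I).Nonempty :=
  ⟨I.sup' hI (‖·‖), (norm_nonneg _).trans (I.le_sup' _ hI.choose_spec), 0,
    fun _ _ h => h.abs_inner_sub_le hI fun x hx => by
      simpa only [sub_zero] using I.le_sup' (‖·‖) hx⟩

theorem medianBallRadii_image_subset {k m : ℕ} (I : Finset (Pt k)) (f : Pt k →ₗᵢ[ℝ] Pt m) :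
    medianBallRadii (I.image f) ⊆ medianBallRadii I := by
  rintro r ⟨hr, c, hc⟩
  refine ⟨hr, LinearMap.adjoint f.toLinearMap c, fun a b h => ?_⟩
  rw [LinearMap.adjoint_inner_right]
  exact hc _ _ (h.map f)

theorem yolkRadius_le_yolkRadius_image {k m : ℕ} (I : Finset (Pt k)) (f : Pt k →ₗᵢ[ℝ] Pt m) :
    yolkRadius I ≤ yolkRadius (I.image f) := by
  rcases I.eq_empty_or_nonempty with rfl | hI
  · rw [yolkRadius_empty]
    exact yolkRadius_nonneg _
  · exact csInf_le_csInf ⟨0, fun _ hr => hr.1⟩ (medianBallRadii_nonempty (hI.image f))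
      (medianBallRadii_image_subset I f)

def embLastₗᵢ (n : ℕ) : Pt n →ₗᵢ[ℝ] Pt (n + 1) where
  toFun := embLast
  map_add' x y := by
    ext i
    refine Fin.lastCases ?_ (fun j => ?_) i <;> simp [embLast]
  map_smul' c x := by
    ext i
    refine Fin.lastCases ?_ (fun j => ?_) i <;> simp [embLast]
  norm_map' x := by simp [EuclideanSpace.norm_eq, embLast, Fin.sum_univ_castSucc]

theorem coe_embLastₗᵢ (n : ℕ) : ⇑(embLastₗᵢ n) = embLast := rfl

open scoped Classical in
theorem embedded_instance_median_and_yolk_general (n : ℕ) (I' : Finset (Pt n)) :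
    (∀ (a : Pt n) (b : ℝ), ‖a‖ = 1 → IsMedianHyperplane I' a b →
      IsMedianHyperplane (I'.image embLast) (embLast a) b) ∧
    yolkRadius I' ≤ yolkRadius (I'.image embLast) := by
  rw [← coe_embLastₗᵢ]
  exact ⟨fun a b _ h => h.map _, yolkRadius_le_yolkRadius_image I' _⟩

open scoped Classical in
/-- Let `k = n + 1 ≥ 2`, let `I' ⊆ ℝ^(k-1)` be finite, and let `I ⊆ ℝ^k` be
its embedding into the hyperplane `{x : x_k = 0}`. Then (1) every median hyperplane `(a,b)`
of `I'` yields the median hyperplane `((a,0), b)` of `I`, and (2) the yolk radius of `I` is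
at least the yolk radius of `I'`. -/
theorem embedded_instance_median_and_yolk (n : ℕ) (hn : 1 ≤ n) (I' : Finset (Pt n)) :
    (∀ (a : Pt n) (b : ℝ), ‖a‖ = 1 → IsMedianHyperplane I' a b →
      IsMedianHyperplane (I'.image embLast) (embLast a) b) ∧
    yolkRadius I' ≤ yolkRadius (I'.image embLast) :=
  embedded_instance_median_and_yolk_general n I'
end
end

section
/- Let η ∈ [−π/2, 0), α ∈ [π/2, π/2 − η], β ∈ [π/2, π], γ ∈ [0, π − β), and δ ∈ [0, π − β − γ). Define D = sin(β+δ+γ) + cos(α+η−γ) − cos(α+η+β+δ) and N = cos(α+η−γ)·cos(δ) − sin(β+δ+γ)·sin(η) − cos(α+η+β+δ)·cos(γ). Then D > 0 and N/D ≥ 1/2. -/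
/-!
With `x = π/2 - α - η`, `u = γ` and `v = π - β - δ` we have `0 ≤ x ≤ π/2` and
`0 ≤ u < v ≤ π/2`, and the three cosines/sines in `D` become
`D = sin (v - u) + sin (x + u) + sin (x + v)`. Monotonicity of sine and cosine gives
`cos δ ≥ sin v` and `sin η ≤ -sin x`, which bounds `N` from below by
`sin (x + u) sin v + sin (v - u) sin x + sin (x + v) cos u`. Expanding `sin (x + u)` and
`sin (x + v)`, twice this bound minus `D` is `sin x · A + cos x · B - sin (v - u)` with
`A, B ≥ sin (v - u)`, hence at least `sin (v - u) (sin x + cos x - 1) ≥ 0`.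
-/

open Real

lemma one_le_sin_add_cos {x : ℝ} (h₀ : 0 ≤ x) (h₁ : x ≤ π / 2) : 1 ≤ sin x + cos x := by
  have hs : 0 ≤ sin x := sin_nonneg_of_nonneg_of_le_pi h₀ (by linarith [pi_pos])
  have hc : 0 ≤ cos x := cos_nonneg_of_neg_pi_div_two_le_of_le (by linarith [pi_pos]) h₁
  nlinarith [sin_sq_add_cos_sq x, mul_nonneg hs (sub_nonneg.2 (sin_le_one x)),
    mul_nonneg hc (sub_nonneg.2 (cos_le_one x))]

section TwoAngles

variable {u v : ℝ}

lemma sin_sub_le_sin_mul_add_sin_mul (hu₀ : 0 ≤ u) (hu₁ : u ≤ π / 2) (hv₀ : 0 ≤ v)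
    (hv₁ : v ≤ π / 2) :
    sin (v - u) ≤ sin u * (2 * sin v - 1) + sin v * (2 * cos u - 1) := by
  have hsu : 0 ≤ sin u := sin_nonneg_of_nonneg_of_le_pi hu₀ (by linarith [pi_pos])
  have hsv : 0 ≤ sin v := sin_nonneg_of_nonneg_of_le_pi hv₀ (by linarith [pi_pos])
  rw [sin_sub]
  nlinarith [mul_nonneg hsu (sub_nonneg.2 (one_le_sin_add_cos hv₀ hv₁)),
    mul_nonneg hsv (sub_nonneg.2 (one_le_sin_add_cos hu₀ hu₁))]

lemma sin_sub_le_cos_mul_add_cos_mul (hu : 0 ≤ u) (huv : u ≤ v) (hv : v ≤ π / 2) :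
    sin (v - u) ≤ cos u * (2 * sin v - 1) + cos v * (2 * cos u - 1) + 2 * sin (v - u) := by
  have hv₀ : 0 ≤ v := hu.trans huv
  have hcv : 0 ≤ cos v := cos_nonneg_of_neg_pi_div_two_le_of_le (by linarith [pi_pos]) hv
  have hsv : 0 ≤ sin v := sin_nonneg_of_nonneg_of_le_pi hv₀ (by linarith [pi_pos])
  have hcos : cos v ≤ cos u := cos_le_cos_of_nonneg_of_le_pi hu (by linarith [pi_pos]) huv
  have hsin : sin u ≤ sin v :=
    sin_le_sin_of_le_of_le_pi_div_two (by linarith [pi_pos]) hv huv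
  have hsc := one_le_sin_add_cos hv₀ hv
  rw [sin_sub]
  -- replace `cos u` by the smaller `cos v` in the term `cos u * (3 sin v + 2 cos v - 1)`
  nlinarith [mul_nonneg (sub_nonneg.2 hcos)
      (show (0 : ℝ) ≤ 3 * sin v + 2 * cos v - 1 by linarith),
    mul_nonneg hcv (show (0 : ℝ) ≤ 3 * sin v + 2 * cos v - 2 - sin u by linarith)]

end TwoAngles

lemma sin_sub_add_sin_add_add_sin_add_le {x u v : ℝ} (hx₀ : 0 ≤ x) (hx₁ : x ≤ π / 2)
    (hu : 0 ≤ u) (huv : u ≤ v) (hv : v ≤ π / 2) :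
    sin (v - u) + sin (x + u) + sin (x + v) ≤
      2 * (sin (x + u) * sin v + sin (v - u) * sin x + sin (x + v) * cos u) := by
  have hsx : 0 ≤ sin x := sin_nonneg_of_nonneg_of_le_pi hx₀ (by linarith [pi_pos])
  have hcx : 0 ≤ cos x := cos_nonneg_of_neg_pi_div_two_le_of_le (by linarith [pi_pos]) hx₁
  have hs : 0 ≤ sin (v - u) :=
    sin_nonneg_of_nonneg_of_le_pi (by linarith) (by linarith [pi_pos])
  have hA := sin_sub_le_cos_mul_add_cos_mul hu huv hv
  have hB := sin_sub_le_sin_mul_add_sin_mul hu (huv.trans hv) (hu.trans huv) hv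
  rw [sin_add x u, sin_add x v]
  nlinarith [mul_le_mul_of_nonneg_left hA hsx, mul_le_mul_of_nonneg_left hB hcx,
    mul_nonneg hs (sub_nonneg.2 (one_le_sin_add_cos hx₀ hx₁))]

lemma sin_sub_add_sin_add_add_sin_add_pos {x u v : ℝ} (hx₀ : 0 ≤ x) (hx₁ : x ≤ π / 2)
    (hu : 0 ≤ u) (huv : u < v) (hv : v ≤ π / 2) :
    0 < sin (v - u) + sin (x + u) + sin (x + v) := by
  have hπ := pi_pos
  have := sin_pos_of_pos_of_lt_pi (x := v - u) (by linarith) (by linarith)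
  have := sin_nonneg_of_nonneg_of_le_pi (x := x + u) (by linarith) (by linarith)
  have := sin_nonneg_of_nonneg_of_le_pi (x := x + v) (by linarith) (by linarith)
  linarith

/-- For angular parameters `η ∈ [−π/2, 0)`, `α ∈ [π/2, π/2 − η]`,
`β ∈ [π/2, π]`, `γ ∈ [0, π − β)`, `δ ∈ [0, π − β − γ)`, with
`D = sin(β+δ+γ) + cos(α+η−γ) − cos(α+η+β+δ)` and
`N = cos(α+η−γ)·cos δ − sin(β+δ+γ)·sin η − cos(α+η+β+δ)·cos γ`,
we have `D > 0` and `N/D ≥ 1/2`. -/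
theorem inradius_ge_half (η α β γ δ : ℝ)
    (hη : η ∈ Set.Ico (-(π / 2)) 0)
    (hα : α ∈ Set.Icc (π / 2) (π / 2 - η))
    (hβ : β ∈ Set.Icc (π / 2) π)
    (hγ : γ ∈ Set.Ico 0 (π - β))
    (hδ : δ ∈ Set.Ico 0 (π - β - γ)) :
    0 < sin (β + δ + γ) + cos (α + η - γ) - cos (α + η + β + δ) ∧
    1 / 2 ≤ (cos (α + η - γ) * cos δ - sin (β + δ + γ) * sin η
        - cos (α + η + β + δ) * cos γ) /
      (sin (β + δ + γ) + cos (α + η - γ) - cos (α + η + β + δ)) := by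
  obtain ⟨hη₀, -⟩ := hη
  obtain ⟨hα₀, hα₁⟩ := hα
  obtain ⟨hβ₀, -⟩ := hβ
  obtain ⟨hγ₀, -⟩ := hγ
  obtain ⟨hδ₀, hδ₁⟩ := hδ
  have hπ := pi_pos
  obtain ⟨x, hx⟩ : ∃ x, x = π / 2 - α - η := ⟨_, rfl⟩
  obtain ⟨v, hv⟩ : ∃ v, v = π - β - δ := ⟨_, rfl⟩
  have h₁ : cos (α + η - γ) = sin (x + γ) := by
    rw [show α + η - γ = π / 2 - (x + γ) by rw [hx]; ring, cos_pi_div_two_sub]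
  have h₂ : sin (β + δ + γ) = sin (v - γ) := by
    rw [show β + δ + γ = π - (v - γ) by rw [hv]; ring, sin_pi_sub]
  have h₃ : cos (α + η + β + δ) = -sin (x + v) := by
    rw [show α + η + β + δ = π / 2 - (x + v) + π by rw [hx, hv]; ring, cos_add_pi,
      cos_pi_div_two_sub]
  have hcosδ : sin v ≤ cos δ := by
    rw [hv, ← cos_pi_div_two_sub]
    exact cos_le_cos_of_nonneg_of_le_pi hδ₀ (by linarith) (by linarith)
  have hsinη : sin η ≤ -sin x := by
    rw [hx, ← sin_neg]
    exact sin_le_sin_of_le_of_le_pi_div_two hη₀ (by linarith) (by linarith)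
  have hD := sin_sub_add_sin_add_add_sin_add_pos (x := x) (u := γ) (v := v)
    (by linarith) (by linarith) hγ₀ (by linarith) (by linarith)
  have hkey := sin_sub_add_sin_add_add_sin_add_le (x := x) (u := γ) (v := v)
    (by linarith) (by linarith) hγ₀ (by linarith) (by linarith)
  rw [h₁, h₂, h₃, sub_neg_eq_add, le_div_iff₀ hD]
  refine ⟨hD, ?_⟩
  nlinarith [mul_le_mul_of_nonneg_left hcosδ (sin_nonneg_of_nonneg_of_le_pi
      (x := x + γ) (by linarith) (by linarith)),
    mul_le_mul_of_nonneg_left hsinη (sin_nonneg_of_nonneg_of_le_pi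
      (x := v - γ) (by linarith) (by linarith))]
end
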